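/- Consider the multi-source Weber problem in ℝ² with ρ_F(x) = ‖x‖ (the Euclidean norm), demand points a¹ = (0,0), a² = (1,0), a³ = (0,1), a⁴ = (1,1), k = 2 centers, and objective f(x¹, x²) = Σ_{i=1}^4 min{‖x¹ − a^i‖, ‖x² − a^i‖}. Then x̄ = ((0.5, 0), (0.5, 1)) is a local minimizer of f with f(x̄) = 2, but x̄ is not a global minimizer, since f((0.2, 0.2), (1,1)) < 2. -/
import Mathlib


/-- A point of the Euclidean plane `ℝ²`. -/
noncomputable def pt (x y : ℝ) : EuclideanSpace ℝ (Fin 2) :=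
  (WithLp.equiv 2 (Fin 2 → ℝ)).symm ![x, y]

/-- The multi-source Weber objective for the four vertices of the unit square
and two centers. -/
noncomputable def fSquare (u v : EuclideanSpace ℝ (Fin 2)) : ℝ :=
  ∑ i : Fin 4, min ‖u - ![pt 0 0, pt 1 0, pt 0 1, pt 1 1] i‖
    ‖v - ![pt 0 0, pt 1 0, pt 0 1, pt 1 1] i‖

lemma pt_sub (x y a b : ℝ) : pt x y - pt a b = pt (x-a) (y-b) := by
  ext i; fin_cases i <;> simp [pt]

lemma norm_pt (x y : ℝ) : ‖pt x y‖ = Real.sqrt (x^2 + y^2) := by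
  rw [EuclideanSpace.norm_eq]
  simp [pt, Fin.sum_univ_two, Real.norm_eq_abs, sq_abs]

lemma fSquare_eq (u v : EuclideanSpace ℝ (Fin 2)) :
    fSquare u v = min ‖u - pt 0 0‖ ‖v - pt 0 0‖ + min ‖u - pt 1 0‖ ‖v - pt 1 0‖
      + min ‖u - pt 0 1‖ ‖v - pt 0 1‖ + min ‖u - pt 1 1‖ ‖v - pt 1 1‖ := by
  simp [fSquare, Fin.sum_univ_four]

lemma sqrt_125 : (1.1:ℝ) ≤ Real.sqrt 1.25 := by
  nlinarith [Real.sq_sqrt (show (0:ℝ) ≤ 1.25 by norm_num), Real.sqrt_nonneg (1.25:ℝ)]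

lemma tri (a b c : EuclideanSpace ℝ (Fin 2)) : ‖a - c‖ ≤ ‖a - b‖ + ‖b - c‖ := by
  simpa [dist_eq_norm] using dist_triangle a b c

lemma val_center : fSquare (pt 0.5 0) (pt 0.5 1) = 2 := by
  have h1 : ‖pt 0.5 0 - pt 0 0‖ = 1/2 := by
    rw [pt_sub, norm_pt, show ((0.5:ℝ)-0)^2+((0:ℝ)-0)^2 = (1/2:ℝ)^2 from by norm_num,
      Real.sqrt_sq (by norm_num)]
  have h2 : ‖pt 0.5 0 - pt 1 0‖ = 1/2 := by
    rw [pt_sub, norm_pt, show ((0.5:ℝ)-1)^2+((0:ℝ)-0)^2 = (1/2:ℝ)^2 from by norm_num,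
      Real.sqrt_sq (by norm_num)]
  have h3 : ‖pt 0.5 1 - pt 0 1‖ = 1/2 := by
    rw [pt_sub, norm_pt, show ((0.5:ℝ)-0)^2+((1:ℝ)-1)^2 = (1/2:ℝ)^2 from by norm_num,
      Real.sqrt_sq (by norm_num)]
  have h4 : ‖pt 0.5 1 - pt 1 1‖ = 1/2 := by
    rw [pt_sub, norm_pt, show ((0.5:ℝ)-1)^2+((1:ℝ)-1)^2 = (1/2:ℝ)^2 from by norm_num,
      Real.sqrt_sq (by norm_num)]
  have g1 : ‖pt 0.5 1 - pt 0 0‖ = Real.sqrt 1.25 := by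
    rw [pt_sub, norm_pt, show ((0.5:ℝ)-0)^2+((1:ℝ)-0)^2 = (1.25:ℝ) from by norm_num]
  have g2 : ‖pt 0.5 1 - pt 1 0‖ = Real.sqrt 1.25 := by
    rw [pt_sub, norm_pt, show ((0.5:ℝ)-1)^2+((1:ℝ)-0)^2 = (1.25:ℝ) from by norm_num]
  have g3 : ‖pt 0.5 0 - pt 0 1‖ = Real.sqrt 1.25 := by
    rw [pt_sub, norm_pt, show ((0.5:ℝ)-0)^2+((0:ℝ)-1)^2 = (1.25:ℝ) from by norm_num]
  have g4 : ‖pt 0.5 0 - pt 1 1‖ = Real.sqrt 1.25 := by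
    rw [pt_sub, norm_pt, show ((0.5:ℝ)-1)^2+((0:ℝ)-1)^2 = (1.25:ℝ) from by norm_num]
  have hle : (1:ℝ)/2 ≤ Real.sqrt 1.25 := by linarith [sqrt_125]
  rw [fSquare_eq, h1, h2, h3, h4, g1, g2, g3, g4,
    min_eq_left hle, min_eq_right hle]
  norm_num

lemma val_other : fSquare (pt 0.2 0.2) (pt 1 1) < 2 := by
  have h1 : ‖pt 0.2 0.2 - pt 0 0‖ = Real.sqrt 0.08 := by
    rw [pt_sub, norm_pt, show ((0.2:ℝ)-0)^2+((0.2:ℝ)-0)^2 = (0.08:ℝ) from by norm_num]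
  have h2 : ‖pt 0.2 0.2 - pt 1 0‖ = Real.sqrt 0.68 := by
    rw [pt_sub, norm_pt, show ((0.2:ℝ)-1)^2+((0.2:ℝ)-0)^2 = (0.68:ℝ) from by norm_num]
  have h3 : ‖pt 0.2 0.2 - pt 0 1‖ = Real.sqrt 0.68 := by
    rw [pt_sub, norm_pt, show ((0.2:ℝ)-0)^2+((0.2:ℝ)-1)^2 = (0.68:ℝ) from by norm_num]
  have g2 : ‖pt 1 1 - pt 1 0‖ = 1 := by
    rw [pt_sub, norm_pt, show ((1:ℝ)-1)^2+((1:ℝ)-0)^2 = (1:ℝ)^2 from by norm_num,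
      Real.sqrt_sq (by norm_num)]
  have g3 : ‖pt 1 1 - pt 0 1‖ = 1 := by
    rw [pt_sub, norm_pt, show ((1:ℝ)-0)^2+((1:ℝ)-1)^2 = (1:ℝ)^2 from by norm_num,
      Real.sqrt_sq (by norm_num)]
  have g4 : ‖pt 1 1 - pt 1 1‖ = 0 := by simp
  have s08 : Real.sqrt 0.08 ≤ 0.29 := by
    nlinarith [Real.sq_sqrt (show (0:ℝ) ≤ 0.08 by norm_num), Real.sqrt_nonneg (0.08:ℝ)]
  have s68 : Real.sqrt 0.68 ≤ 0.825 := by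
    nlinarith [Real.sq_sqrt (show (0:ℝ) ≤ 0.68 by norm_num), Real.sqrt_nonneg (0.68:ℝ)]
  rw [fSquare_eq, h1, h2, h3, g2, g3, g4]
  have m1 : min (Real.sqrt 0.08) ‖pt 1 1 - pt 0 0‖ ≤ Real.sqrt 0.08 := min_le_left _ _
  have m2 : min (Real.sqrt 0.68) 1 ≤ Real.sqrt 0.68 := min_le_left _ _
  have m4 : min ‖pt 0.2 0.2 - pt 1 1‖ 0 ≤ 0 := min_le_right _ _
  linarith

theorem stmt15 :
    (∃ ε > (0 : ℝ), ∀ u v : EuclideanSpace ℝ (Fin 2),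
        ‖u - pt 0.5 0‖ < ε → ‖v - pt 0.5 1‖ < ε →
          fSquare (pt 0.5 0) (pt 0.5 1) ≤ fSquare u v) ∧
      fSquare (pt 0.5 0) (pt 0.5 1) = 2 ∧
      fSquare (pt 0.2 0.2) (pt 1 1) < 2 ∧
      ¬ (∀ u v : EuclideanSpace ℝ (Fin 2), fSquare (pt 0.5 0) (pt 0.5 1) ≤ fSquare u v) := by
  have hval := val_center
  have hother := val_other
  refine ⟨⟨1/10, by norm_num, ?_⟩, hval, hother, ?_⟩
  · intro u v hu hv
    rw [hval]
    -- distances from the centers to the demand points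
    have c1 : ‖pt 0.5 0 - pt 0 0‖ = 1/2 := by
      rw [pt_sub, norm_pt, show ((0.5:ℝ)-0)^2+((0:ℝ)-0)^2 = (1/2:ℝ)^2 from by norm_num,
        Real.sqrt_sq (by norm_num)]
    have c2 : ‖pt 0.5 0 - pt 1 0‖ = 1/2 := by
      rw [pt_sub, norm_pt, show ((0.5:ℝ)-1)^2+((0:ℝ)-0)^2 = (1/2:ℝ)^2 from by norm_num,
        Real.sqrt_sq (by norm_num)]
    have c3 : ‖pt 0.5 1 - pt 0 1‖ = 1/2 := by
      rw [pt_sub, norm_pt, show ((0.5:ℝ)-0)^2+((1:ℝ)-1)^2 = (1/2:ℝ)^2 from by norm_num,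
        Real.sqrt_sq (by norm_num)]
    have c4 : ‖pt 0.5 1 - pt 1 1‖ = 1/2 := by
      rw [pt_sub, norm_pt, show ((0.5:ℝ)-1)^2+((1:ℝ)-1)^2 = (1/2:ℝ)^2 from by norm_num,
        Real.sqrt_sq (by norm_num)]
    have d1 : ‖pt 0.5 1 - pt 0 0‖ = Real.sqrt 1.25 := by
      rw [pt_sub, norm_pt, show ((0.5:ℝ)-0)^2+((1:ℝ)-0)^2 = (1.25:ℝ) from by norm_num]
    have d2 : ‖pt 0.5 1 - pt 1 0‖ = Real.sqrt 1.25 := by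
      rw [pt_sub, norm_pt, show ((0.5:ℝ)-1)^2+((1:ℝ)-0)^2 = (1.25:ℝ) from by norm_num]
    have d3 : ‖pt 0.5 0 - pt 0 1‖ = Real.sqrt 1.25 := by
      rw [pt_sub, norm_pt, show ((0.5:ℝ)-0)^2+((0:ℝ)-1)^2 = (1.25:ℝ) from by norm_num]
    have d4 : ‖pt 0.5 0 - pt 1 1‖ = Real.sqrt 1.25 := by
      rw [pt_sub, norm_pt, show ((0.5:ℝ)-1)^2+((0:ℝ)-1)^2 = (1.25:ℝ) from by norm_num]
    have s125 := sqrt_125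
    -- u is close to the near points a¹, a²; v is far from them, and vice versa
    have hu1 : ‖u - pt 0 0‖ ≤ 3/5 := by
      have := tri u (pt 0.5 0) (pt 0 0); rw [c1] at this; linarith
    have hu2 : ‖u - pt 1 0‖ ≤ 3/5 := by
      have := tri u (pt 0.5 0) (pt 1 0); rw [c2] at this; linarith
    have hv3 : ‖v - pt 0 1‖ ≤ 3/5 := by
      have := tri v (pt 0.5 1) (pt 0 1); rw [c3] at this; linarith
    have hv4 : ‖v - pt 1 1‖ ≤ 3/5 := by
      have := tri v (pt 0.5 1) (pt 1 1); rw [c4] at this; linarith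
    have hv1 : 1 ≤ ‖v - pt 0 0‖ := by
      have := tri (pt 0.5 1) v (pt 0 0)
      rw [d1, norm_sub_rev (pt 0.5 1) v] at this; linarith
    have hv2 : 1 ≤ ‖v - pt 1 0‖ := by
      have := tri (pt 0.5 1) v (pt 1 0)
      rw [d2, norm_sub_rev (pt 0.5 1) v] at this; linarith
    have hu3 : 1 ≤ ‖u - pt 0 1‖ := by
      have := tri (pt 0.5 0) u (pt 0 1)
      rw [d3, norm_sub_rev (pt 0.5 0) u] at this; linarith
    have hu4 : 1 ≤ ‖u - pt 1 1‖ := by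
      have := tri (pt 0.5 0) u (pt 1 1)
      rw [d4, norm_sub_rev (pt 0.5 0) u] at this; linarith
    rw [fSquare_eq,
      min_eq_left (by linarith : ‖u - pt 0 0‖ ≤ ‖v - pt 0 0‖),
      min_eq_left (by linarith : ‖u - pt 1 0‖ ≤ ‖v - pt 1 0‖),
      min_eq_right (by linarith : ‖v - pt 0 1‖ ≤ ‖u - pt 0 1‖),
      min_eq_right (by linarith : ‖v - pt 1 1‖ ≤ ‖u - pt 1 1‖)]
    -- triangle inequality: sum of distances to the two endpoints is at least the side length
    have e1 : ‖pt 0 0 - pt 1 0‖ = 1 := by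
      rw [pt_sub, norm_pt, show ((0:ℝ)-1)^2+((0:ℝ)-0)^2 = (1:ℝ)^2 from by norm_num,
        Real.sqrt_sq (by norm_num)]
    have e2 : ‖pt 0 1 - pt 1 1‖ = 1 := by
      rw [pt_sub, norm_pt, show ((0:ℝ)-1)^2+((1:ℝ)-1)^2 = (1:ℝ)^2 from by norm_num,
        Real.sqrt_sq (by norm_num)]
    have t1 : (1:ℝ) ≤ ‖u - pt 0 0‖ + ‖u - pt 1 0‖ := by
      have := tri (pt 0 0) u (pt 1 0)
      rw [e1, norm_sub_rev (pt 0 0) u] at this; linarith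
    have t2 : (1:ℝ) ≤ ‖v - pt 0 1‖ + ‖v - pt 1 1‖ := by
      have := tri (pt 0 1) v (pt 1 1)
      rw [e2, norm_sub_rev (pt 0 1) v] at this; linarith
    linarith
  · intro h
    have := h (pt 0.2 0.2) (pt 1 1)
    rw [hval] at this
    linarith
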